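/- arXiv:2411.01625 — 3 statements merged into one kernel-verified Lean document; each statement's English description precedes it below -/
import Mathlib

section
/- Let W = (W1, ..., WK) be a vector of independent real-valued random variables and let W' be an i.i.d. copy of W, independent of W. For a square-integrable function f of W and a nonempty subset S of {1,...,K}, the pick-freeze identity holds: E[Var(f(W) | W_{-S})] = (1/2) * E[(f(W) - f(W'_S, W_{-S}))^2], where (W'_S, W_{-S}) denotes the hybrid vector whose coordinates in S come from W' and whose coordinates outside S come from W. -/
/-!
Split `W` into `U = W_S` and `V = W_{-S}`, so that `f (W) = F (U, V)` and the hybrid vector gives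
`F (U', V)`. Since `U` is independent of `V`, the conditional expectation of `F (U, V)` given `V`
is `h (V)` with `h v = ∫ F (u, v) dπ(u)`, where `π`, `ρ` are the laws of `U`, `V`. The triple
`(U', U, V)` has law `π ⊗ π ⊗ ρ`; for the centred `G = F - h ∘ snd`, expanding
`E[(G (U, V) - G (U', V))²]` gives `2 E[G (U, V)²]`, because the cross term vanishes by
Fubini: `G (·, v)` has mean zero for a.e. `v`.
-/

open MeasureTheory ProbabilityTheory

/-- Hybrid vector: coordinates in `S` from `w'`, the rest from `w`. -/
def hybrid {K : ℕ} (S : Finset (Fin K)) (w' w : Fin K → ℝ) : Fin K → ℝ :=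
  fun i => if i ∈ S then w' i else w i

/-- The σ-algebra generated by the coordinates of `W` outside `S`. -/
def coordSigma {Ω : Type*} [MeasurableSpace Ω] {K : ℕ} (W : Ω → Fin K → ℝ)
    (S : Finset (Fin K)) : MeasurableSpace Ω :=
  MeasurableSpace.comap (fun ω => fun i : {i : Fin K // i ∉ S} => W ω i) inferInstance

lemma sq_integral_le_integral_sq {α : Type*} [MeasurableSpace α] {π : Measure α}
    [IsProbabilityMeasure π] {g : α → ℝ} (hg : MemLp g 2 π) :
    (∫ u, g u ∂π) ^ 2 ≤ ∫ u, g u ^ 2 ∂π := by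
  have := variance_nonneg g π
  rw [variance_eq_sub hg] at this
  simpa using this

lemma integral_sq_sub {α : Type*} [MeasurableSpace α] {μ : Measure α} {a b : α → ℝ}
    (ha : MemLp a 2 μ) (hb : MemLp b 2 μ) :
    ∫ x, (a x - b x) ^ 2 ∂μ = ∫ x, a x ^ 2 ∂μ - 2 * ∫ x, a x * b x ∂μ + ∫ x, b x ^ 2 ∂μ := by
  have hab : Integrable (fun x => 2 * (a x * b x)) μ := (ha.integrable_mul hb).const_mul 2
  have hsub : Integrable (fun x => a x ^ 2 - 2 * (a x * b x)) μ := ha.integrable_sq.sub hab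
  simp_rw [sub_sq, mul_assoc]
  rw [integral_add hsub hb.integrable_sq, integral_sub ha.integrable_sq hab, integral_const_mul]

lemma MeasureTheory.MeasurePreserving.integral_comp_of_aestronglyMeasurable
    {α β E : Type*} [MeasurableSpace α] [MeasurableSpace β] [NormedAddCommGroup E]
    [NormedSpace ℝ E] {μ : Measure α} {ν : Measure β} {f : α → β} (hf : MeasurePreserving f μ ν)
    {g : β → E} (hg : AEStronglyMeasurable g ν) :
    ∫ x, g (f x) ∂μ = ∫ y, g y ∂ν := by
  rw [← hf.map_eq] at hg ⊢
  exact (integral_map hf.measurable.aemeasurable hg).symm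

lemma MeasureTheory.MemLp.prodMk_right {α β : Type*} [MeasurableSpace α] [MeasurableSpace β]
    {μ : Measure α} {ν : Measure β} [SFinite μ] [SFinite ν] {F : α × β → ℝ}
    (hF : MemLp F 2 (μ.prod ν)) : ∀ᵐ y ∂ν, MemLp (fun x => F (x, y)) 2 μ := by
  filter_upwards [hF.integrable_sq.prod_left_ae, hF.aestronglyMeasurable.prodMk_right]
    with y hy_sq hy
  exact (memLp_two_iff_integrable_sq hy).mpr hy_sq

section Resample

variable {α β : Type*} [MeasurableSpace α] [MeasurableSpace β] {π : Measure α} {ρ : Measure β}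
  [IsProbabilityMeasure π] [SFinite ρ]

lemma MeasureTheory.MemLp.integral_prod_right {F : α × β → ℝ} (hF : MemLp F 2 (π.prod ρ)) :
    MemLp (fun v => ∫ u, F (u, v) ∂π) 2 ρ := by
  have hm : AEStronglyMeasurable (fun v => ∫ u, F (u, v) ∂π) ρ :=
    hF.aestronglyMeasurable.prod_swap.integral_prod_right'
  refine (memLp_two_iff_integrable_sq hm).mpr <| hF.integrable_sq.integral_prod_right.mono'
    (hm.aemeasurable.pow_const 2).aestronglyMeasurable ?_
  filter_upwards [hF.prodMk_right] with v hv
  rw [Real.norm_eq_abs, abs_of_nonneg (sq_nonneg _)]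
  exact sq_integral_le_integral_sq hv

lemma measurePreserving_resample :
    MeasurePreserving (fun q : α × α × β => (q.1, q.2.2)) (π.prod (π.prod ρ)) (π.prod ρ) :=
  (MeasurePreserving.id π).prod measurePreserving_snd

lemma integral_mul_resample_eq_zero {G : α × β → ℝ} (hG : MemLp G 2 (π.prod ρ))
    (hG₀ : ∀ᵐ v ∂ρ, ∫ u, G (u, v) ∂π = 0) :
    ∫ q, G q.2 * G (q.1, q.2.2) ∂π.prod (π.prod ρ) = 0 := by
  have hint : Integrable (fun q => G q.2 * G (q.1, q.2.2)) (π.prod (π.prod ρ)) :=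
    (hG.comp_measurePreserving measurePreserving_snd).integrable_mul
      (hG.comp_measurePreserving measurePreserving_resample)
  rw [integral_prod _ hint]
  refine integral_eq_zero_of_ae ?_
  filter_upwards [hint.prod_right_ae] with u' hu'
  rw [integral_prod_symm _ hu']
  refine integral_eq_zero_of_ae ?_
  filter_upwards [hG₀] with v hv
  rw [integral_mul_const, hv, zero_mul, Pi.zero_apply]

lemma integral_sq_sub_resample_of_centered {G : α × β → ℝ} (hG : MemLp G 2 (π.prod ρ))
    (hG₀ : ∀ᵐ v ∂ρ, ∫ u, G (u, v) ∂π = 0) :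
    ∫ q, (G q.2 - G (q.1, q.2.2)) ^ 2 ∂π.prod (π.prod ρ) = 2 * ∫ p, G p ^ 2 ∂π.prod ρ := by
  have hG₁ : MemLp (fun q : α × α × β => G q.2) 2 (π.prod (π.prod ρ)) :=
    hG.comp_measurePreserving measurePreserving_snd
  have hG₂ : MemLp (fun q : α × α × β => G (q.1, q.2.2)) 2 (π.prod (π.prod ρ)) :=
    hG.comp_measurePreserving measurePreserving_resample
  have hsq := hG.integrable_sq.aestronglyMeasurable
  rw [integral_sq_sub hG₁ hG₂, integral_mul_resample_eq_zero hG hG₀,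
    measurePreserving_snd.integral_comp_of_aestronglyMeasurable (g := fun p => G p ^ 2) hsq,
    measurePreserving_resample.integral_comp_of_aestronglyMeasurable (g := fun p => G p ^ 2) hsq]
  ring

theorem integral_sq_sub_resample {F : α × β → ℝ} (hF : MemLp F 2 (π.prod ρ)) :
    ∫ q, (F q.2 - F (q.1, q.2.2)) ^ 2 ∂π.prod (π.prod ρ) =
      2 * ∫ p, (F p - ∫ u, F (u, p.2) ∂π) ^ 2 ∂π.prod ρ := by
  have hG : MemLp (fun p => F p - ∫ u, F (u, p.2) ∂π) 2 (π.prod ρ) :=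
    hF.sub (hF.integral_prod_right.comp_measurePreserving measurePreserving_snd)
  have hG₀ : ∀ᵐ v ∂ρ, ∫ u, (F (u, v) - ∫ u', F (u', v) ∂π) ∂π = 0 := by
    filter_upwards [hF.prodMk_right] with v hv
    rw [integral_sub (hv.integrable one_le_two) (integrable_const _), integral_const,
      probReal_univ, one_smul, sub_self]
  rw [← integral_sq_sub_resample_of_centered hG hG₀]
  simp only [sub_sub_sub_cancel_right]

end Resample

section PickFreeze

variable {Ω α β : Type*} [MeasurableSpace Ω] [MeasurableSpace α] [mβ : MeasurableSpace β]
  {μ : Measure Ω}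

lemma condExp_comp_prodMk_ae_eq_integral [IsFiniteMeasure μ] {U : Ω → α} {V : Ω → β}
    (hU : Measurable U) (hV : Measurable V) (hUV : IndepFun U V μ) {F : α × β → ℝ}
    (hF : Measurable F) (hF_int : Integrable F ((μ.map U).prod (μ.map V))) :
    μ[fun ω => F (U ω, V ω) | mβ.comap V] =ᵐ[μ] fun ω => ∫ u, F (u, V ω) ∂μ.map U := by
  have hP : MeasurePreserving (fun ω => (U ω, V ω)) μ ((μ.map U).prod (μ.map V)) :=
    ⟨hU.prodMk hV, (indepFun_iff_map_prod_eq_prod_map_map hU.aemeasurable hV.aemeasurable).mp hUV⟩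
  have hh : StronglyMeasurable fun v => ∫ u, F (u, v) ∂μ.map U :=
    hF.stronglyMeasurable.integral_prod_left'
  have hh_int : Integrable (fun v => ∫ u, F (u, v) ∂μ.map U) (μ.map V) :=
    hF_int.integral_prod_right
  refine (ae_eq_condExp_of_forall_setIntegral_eq hV.comap_le
    (hP.integrable_comp_of_integrable hF_int) (fun s _ _ => ?_) ?_ ?_).symm
  · exact ((integrable_map_measure hh.aestronglyMeasurable hV.aemeasurable).mp hh_int).integrableOn
  · rintro s ⟨A, hA, rfl⟩ _
    calc ∫ ω in V ⁻¹' A, ∫ u, F (u, V ω) ∂μ.map U ∂μ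
        = ∫ v in A, ∫ u, F (u, v) ∂μ.map U ∂μ.map V :=
          (setIntegral_map hA hh.aestronglyMeasurable hV.aemeasurable).symm
      _ = ∫ p in Set.univ ×ˢ A, F p ∂(μ.map U).prod (μ.map V) := by
          rw [← Measure.prod_restrict, Measure.restrict_univ,
            integral_prod_symm _ (hF_int.mono_measure
              (Measure.prod_mono le_rfl Measure.restrict_le_self))]
      _ = ∫ ω in V ⁻¹' A, F (U ω, V ω) ∂μ := by
          rw [← hP.map_eq, setIntegral_map (MeasurableSet.univ.prod hA) hF.aestronglyMeasurable
            hP.measurable.aemeasurable, Set.mk_preimage_prod, Set.preimage_univ, Set.univ_inter]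
  · exact (hh.comp_measurable (comap_measurable V)).aestronglyMeasurable

theorem integral_sq_sub_condExp_eq_half_integral_sq_sub_resample [IsProbabilityMeasure μ]
    {U U' : Ω → α} {V : Ω → β} (hU : Measurable U) (hU' : Measurable U') (hV : Measurable V)
    (hUV : IndepFun U V μ) (hU'UV : IndepFun U' (fun ω => (U ω, V ω)) μ)
    (hlaw : μ.map U' = μ.map U) {F : α × β → ℝ} (hF : Measurable F)
    (hF_L2 : MemLp (fun ω => F (U ω, V ω)) 2 μ) :
    ∫ ω, (F (U ω, V ω) - μ[fun ω => F (U ω, V ω) | mβ.comap V] ω) ^ 2 ∂μ =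
      1 / 2 * ∫ ω, (F (U ω, V ω) - F (U' ω, V ω)) ^ 2 ∂μ := by
  set π := μ.map U
  set ρ := μ.map V
  have : IsProbabilityMeasure π := Measure.isProbabilityMeasure_map hU.aemeasurable
  have : IsProbabilityMeasure ρ := Measure.isProbabilityMeasure_map hV.aemeasurable
  have hP : MeasurePreserving (fun ω => (U ω, V ω)) μ (π.prod ρ) :=
    ⟨hU.prodMk hV, (indepFun_iff_map_prod_eq_prod_map_map hU.aemeasurable hV.aemeasurable).mp hUV⟩
  have hT : MeasurePreserving (fun ω => (U' ω, U ω, V ω)) μ (π.prod (π.prod ρ)) := by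
    refine ⟨hU'.prodMk hP.measurable, ?_⟩
    rw [(indepFun_iff_map_prod_eq_prod_map_map hU'.aemeasurable hP.measurable.aemeasurable).mp
      hU'UV, hlaw, hP.map_eq]
  have hF_L2' : MemLp F 2 (π.prod ρ) := by
    rw [← hP.map_eq]
    exact (memLp_map_measure_iff hF.aestronglyMeasurable hP.aemeasurable).mpr hF_L2
  have hh : Measurable fun v => ∫ u, F (u, v) ∂π :=
    hF.stronglyMeasurable.integral_prod_left'.measurable
  have hce := condExp_comp_prodMk_ae_eq_integral hU hV hUV hF (hF_L2'.integrable one_le_two)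
  calc ∫ ω, (F (U ω, V ω) - μ[fun ω => F (U ω, V ω) | mβ.comap V] ω) ^ 2 ∂μ
      = ∫ ω, (F (U ω, V ω) - ∫ u, F (u, V ω) ∂π) ^ 2 ∂μ :=
        integral_congr_ae (by filter_upwards [hce] with ω hω; rw [hω])
    _ = ∫ p, (F p - ∫ u, F (u, p.2) ∂π) ^ 2 ∂π.prod ρ :=
        hP.integral_comp_of_aestronglyMeasurable (g := fun p => (F p - ∫ u, F (u, p.2) ∂π) ^ 2)
          ((hF.sub (hh.comp measurable_snd)).pow_const 2).aestronglyMeasurable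
    _ = 1 / 2 * ∫ q, (F q.2 - F (q.1, q.2.2)) ^ 2 ∂π.prod (π.prod ρ) := by
        rw [integral_sq_sub_resample hF_L2']; ring
    _ = 1 / 2 * ∫ ω, (F (U ω, V ω) - F (U' ω, V ω)) ^ 2 ∂μ := by
        rw [hT.integral_comp_of_aestronglyMeasurable (g := fun q => (F q.2 - F (q.1, q.2.2)) ^ 2)
          (((hF.comp measurable_snd).sub (hF.comp (measurable_fst.prodMk
            measurable_snd.snd))).pow_const 2).aestronglyMeasurable]

end PickFreeze

lemma ProbabilityTheory.iIndepFun.indepFun_finset_compl {Ω ι : Type*} [MeasurableSpace Ω]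
    {μ : Measure Ω} [Fintype ι] [DecidableEq ι] {β : ι → Type*} [∀ i, MeasurableSpace (β i)]
    {X : ∀ i, Ω → β i} (hX : iIndepFun X μ) (hX_meas : ∀ i, Measurable (X i)) (S : Finset ι) :
    IndepFun (fun ω (i : S) => X i ω) (fun ω (i : {i // i ∉ S}) => X i ω) μ :=
  (hX.indepFun_finset S Sᶜ disjoint_compl_right hX_meas).comp measurable_id
    (measurable_pi_lambda (fun (x : ∀ i : ↥Sᶜ, β i) (i : {i // i ∉ S}) =>
      x ⟨i.1, Finset.mem_compl.2 i.2⟩) fun _ => measurable_pi_apply _)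

theorem stmt2_general {Ω : Type*} [MeasurableSpace Ω] (μ : Measure Ω) [IsProbabilityMeasure μ]
    {K : ℕ} (W W' : Ω → Fin K → ℝ)
    (hW : Measurable W) (hW' : Measurable W')
    (hiW : iIndepFun
      (fun i ω => W ω i) μ)
    (hcopy : μ.map W' = μ.map W)
    (hindep : IndepFun W W' μ)
    (f : (Fin K → ℝ) → ℝ) (hf : Measurable f)
    (hL2 : MemLp (fun ω => f (W ω)) 2 μ)
    (S : Finset (Fin K)) :
    ∫ ω, (f (W ω) - (μ[fun ω => f (W ω) | coordSigma W S]) ω)^2 ∂μ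
      = (1/2) * ∫ ω, (f (W ω) - f (hybrid S (W' ω) (W ω)))^2 ∂μ := by
  set e := MeasurableEquiv.piEquivPiSubtypeProd (fun _ : Fin K => ℝ) (· ∈ S)
  have he₁ : Measurable fun w => (e w).1 := e.measurable.fst
  have hhybrid : ∀ w' w, hybrid S w' w = e.symm ((e w').1, (e w).2) := by
    intro w' w; funext i; by_cases hi : i ∈ S <;> simp [hybrid, e, hi]
  have hlaw : μ.map (fun ω => (e (W' ω)).1) = μ.map (fun ω => (e (W ω)).1) := by
    have := congrArg (Measure.map fun w => (e w).1) hcopy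
    rwa [Measure.map_map he₁ hW', Measure.map_map he₁ hW] at this
  have key := integral_sq_sub_condExp_eq_half_integral_sq_sub_resample
    (he₁.comp hW) (he₁.comp hW') (e.measurable.snd.comp hW)
    (hiW.indepFun_finset_compl (fun i => (measurable_pi_apply i).comp hW) S)
    (hindep.symm.comp he₁ e.measurable) hlaw (hf.comp e.symm.measurable) (by simpa using hL2)
  simp only [Function.comp_apply, Prod.mk.eta, e.symm_apply_apply, ← hhybrid] at key
  exact key

/-- Pick-freeze identity for Sobol's upper index:
`E[Var(f(W) | W_{-S})] = (1/2) E[(f(W) - f(W'_S, W_{-S}))^2]`. -/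
theorem stmt2 {Ω : Type*} [MeasurableSpace Ω] (μ : Measure Ω) [IsProbabilityMeasure μ]
    {K : ℕ} (W W' : Ω → Fin K → ℝ)
    (hW : Measurable W) (hW' : Measurable W')
    (hiW : iIndepFun
      (fun i ω => W ω i) μ)
    (hcopy : μ.map W' = μ.map W)
    (hindep : IndepFun W W' μ)
    (f : (Fin K → ℝ) → ℝ) (hf : Measurable f)
    (hL2 : MemLp (fun ω => f (W ω)) 2 μ)
    (S : Finset (Fin K)) (hS : S.Nonempty) :
    ∫ ω, (f (W ω) - (μ[fun ω => f (W ω) | coordSigma W S]) ω)^2 ∂μ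
      = (1/2) * ∫ ω, (f (W ω) - f (hybrid S (W' ω) (W ω)))^2 ∂μ :=
  stmt2_general μ W W' hW hW' hiW hcopy hindep f hf hL2 S
end

section
/- (Hoeffding orthogonality) Let W = (W1,...,WK) be independent random variables and f square-integrable, with ANOVA components f_S defined inductively by f_emptyset = E[f(W)] and f_S(w_S) = E[f(W) - sum over strict subsets S' of S of f_{S'}(W_{S'}) | W_S = w_S]. Then for any two distinct subsets S and S' of {1,...,K}, E[f_S(W_S) * f_{S'}(W_{S'})] = 0. -/
/-!
Unfolding the recursion gives `E[f(W) | W_R] = ∑_{S ⊆ R} f_S` for every `R`. From this one shows,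
by strong induction on `S`, that `E[f_S | W_T] = 0` whenever `S ⊈ T`: with `R = S ∩ T ⊊ S`,
independence of the coordinates reduces conditioning on `W_T` to conditioning on `W_R`, and then
the tower property turns `E[f_S | W_R]` into
`E[f(W) | W_R] - ∑_{S' ⊊ S} E[f_{S'} | W_R] = ∑_{S' ⊆ R} f_{S'} - ∑_{S' ⊆ R} f_{S'} = 0`.
For distinct `S, S'` one of them, say `S`, is not contained in the other, and conditioning the
product on `W_{S'}` gives `E[f_S f_{S'}] = E[f_{S'} E[f_S | W_{S'}]] = 0`.
-/

open MeasureTheory ProbabilityTheory Finset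

/-- The σ-algebra generated by the coordinates of `W` inside `S`. -/
def coordSigmaIn {Ω : Type*} [MeasurableSpace Ω] {K : ℕ} (W : Ω → Fin K → ℝ)
    (S : Finset (Fin K)) : MeasurableSpace Ω :=
  MeasurableSpace.comap (fun ω => fun i : {i : Fin K // i ∈ S} => W ω i) inferInstance

/-- The ANOVA component `f_S(W_S)`, defined inductively by
`f_S(w_S) = E[f(W) - ∑_{S' ⊊ S} f_{S'}(W_{S'}) | W_S = w_S]`. -/
noncomputable def anovaComp {Ω : Type*} [MeasurableSpace Ω] (μ : Measure Ω) {K : ℕ}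
    (W : Ω → Fin K → ℝ) (f : (Fin K → ℝ) → ℝ) (S : Finset (Fin K)) : Ω → ℝ :=
  μ[ (fun ω => f (W ω) -
      ∑ S' ∈ (S.powerset.erase S).attach, anovaComp μ W f S'.1 ω) | coordSigmaIn W S ]
termination_by S.card
decreasing_by
  have h1 := Finset.mem_erase.mp S'.2
  exact Finset.card_lt_card (lt_of_le_of_ne (Finset.mem_powerset.mp h1.2) h1.1)

section General

variable {Ω : Type*}

theorem MeasurableSpace.sup_eq_generateFrom_image2_inter (m₁ m₂ : MeasurableSpace Ω) :
    m₁ ⊔ m₂ = MeasurableSpace.generateFrom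
      (Set.image2 (· ∩ ·) {s | MeasurableSet[m₁] s} {s | MeasurableSet[m₂] s}) := by
  refine le_antisymm (sup_le ?_ ?_) (MeasurableSpace.generateFrom_le ?_)
  · exact fun s hs => MeasurableSpace.measurableSet_generateFrom
      ⟨s, hs, Set.univ, MeasurableSet.univ, Set.inter_univ s⟩
  · exact fun s hs => MeasurableSpace.measurableSet_generateFrom
      ⟨Set.univ, MeasurableSet.univ, s, hs, Set.univ_inter s⟩
  · rintro _ ⟨s, hs, t, ht, rfl⟩
    exact (le_sup_left (b := m₂) s hs).inter (le_sup_right (a := m₁) t ht)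

theorem isPiSystem_image2_inter (m₁ m₂ : MeasurableSpace Ω) :
    IsPiSystem (Set.image2 (· ∩ ·) {s | MeasurableSet[m₁] s} {s | MeasurableSet[m₂] s}) := by
  rintro _ ⟨s₁, hs₁, t₁, ht₁, rfl⟩ _ ⟨s₂, hs₂, t₂, ht₂, rfl⟩ -
  exact ⟨s₁ ∩ s₂, hs₁.inter hs₂, t₁ ∩ t₂, ht₁.inter ht₂, Set.inter_inter_inter_comm _ _ _ _⟩

theorem setIntegral_eq_of_isPiSystem {E : Type*} [NormedAddCommGroup E] [NormedSpace ℝ E]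
    {m : MeasurableSpace Ω} [m0 : MeasurableSpace Ω] {μ : Measure Ω} (hm : m ≤ m0) {p : Set (Set Ω)}
    (h_eq : m = MeasurableSpace.generateFrom p) (h_pi : IsPiSystem p) (h_univ : Set.univ ∈ p)
    {f g : Ω → E} (hf : Integrable f μ) (hg : Integrable g μ)
    (h_basic : ∀ t ∈ p, ∫ x in t, f x ∂μ = ∫ x in t, g x ∂μ) {t : Set Ω}
    (ht : MeasurableSet[m] t) :
    ∫ x in t, f x ∂μ = ∫ x in t, g x ∂μ := by
  have h_total : ∫ x, f x ∂μ = ∫ x, g x ∂μ := by simpa using h_basic _ h_univ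
  induction t, ht using MeasurableSpace.induction_on_inter h_eq h_pi with
  | empty => simp
  | basic t ht => exact h_basic t ht
  | compl t ht ih =>
    rw [setIntegral_compl (hm t ht) hf, setIntegral_compl (hm t ht) hg, ih, h_total]
  | iUnion s hd hs ih =>
    rw [integral_iUnion (fun i => hm _ (hs i)) hd hf.integrableOn,
      integral_iUnion (fun i => hm _ (hs i)) hd hg.integrableOn]
    exact tsum_congr ih

theorem setIntegral_inter_eq_measureReal_mul_of_indep {m₁ m₂ : MeasurableSpace Ω}
    [m0 : MeasurableSpace Ω] {μ : Measure Ω}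
    (hm₁ : m₁ ≤ m0) (hm₂ : m₂ ≤ m0) (hindep : Indep m₁ m₂ μ) {V : Ω → ℝ}
    (hV : StronglyMeasurable[m₁] V) {s t : Set Ω} (hs : MeasurableSet[m₁] s)
    (ht : MeasurableSet[m₂] t) :
    ∫ x in s ∩ t, V x ∂μ = μ.real t * ∫ x in s, V x ∂μ := by
  have hVs : StronglyMeasurable[m₁] (s.indicator V) := hV.indicator hs
  have h1t : StronglyMeasurable[m₂] (t.indicator (1 : Ω → ℝ)) := stronglyMeasurable_one.indicator ht
  have hindep' : IndepFun (s.indicator V) (t.indicator (1 : Ω → ℝ)) μ := by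
    rw [IndepFun_iff_Indep]
    exact indep_of_indep_of_le_left (indep_of_indep_of_le_right hindep h1t.measurable.comap_le)
      hVs.measurable.comap_le
  calc ∫ x in s ∩ t, V x ∂μ = ∫ x, s.indicator V x * t.indicator 1 x ∂μ := by
        rw [← integral_indicator ((hm₁ s hs).inter (hm₂ t ht)), ← Set.indicator_indicator]
        congr 1; funext x
        by_cases hxs : x ∈ s <;> by_cases hxt : x ∈ t <;> simp [hxs, hxt]
    _ = (∫ x, s.indicator V x ∂μ) * ∫ x, t.indicator 1 x ∂μ :=
        hindep'.integral_fun_mul_eq_mul_integral (hVs.mono hm₁).aestronglyMeasurable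
          (h1t.mono hm₂).aestronglyMeasurable
    _ = μ.real t * ∫ x in s, V x ∂μ := by
        rw [integral_indicator (hm₁ s hs), integral_indicator_one (hm₂ t ht), mul_comm]

theorem condExp_sup_indep_eq {m₁ m₂ m₃ : MeasurableSpace Ω} [m0 : MeasurableSpace Ω]
    {μ : Measure Ω} [IsFiniteMeasure μ]
    (hm₁ : m₁ ≤ m0) (hm₃ : m₃ ≤ m0) (hm₂₁ : m₂ ≤ m₁) (hindep : Indep m₁ m₃ μ) {X : Ω → ℝ}
    (hX : StronglyMeasurable[m₁] X) :
    μ[X | m₂ ⊔ m₃] =ᵐ[μ] μ[X | m₂] := by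
  by_cases hXi : Integrable X μ
  swap
  · rw [condExp_of_not_integrable hXi, condExp_of_not_integrable hXi]
  have hm₂ : m₂ ≤ m0 := hm₂₁.trans hm₁
  have hm : m₂ ⊔ m₃ ≤ m0 := sup_le hm₂ hm₃
  have hXm : StronglyMeasurable[m₂ ⊔ m₃] (μ[X | m₂]) := stronglyMeasurable_condExp.mono le_sup_left
  refine (ae_eq_condExp_of_forall_setIntegral_eq hm hXi
    (fun s _ _ => integrable_condExp.integrableOn) (fun s hs _ => ?_) hXm.aestronglyMeasurable).symm
  have huniv : Set.univ ∈ Set.image2 (· ∩ ·) {s | MeasurableSet[m₂] s} {s | MeasurableSet[m₃] s} :=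
    ⟨_, @MeasurableSet.univ _ m₂, _, @MeasurableSet.univ _ m₃, Set.inter_univ _⟩
  refine setIntegral_eq_of_isPiSystem hm (MeasurableSpace.sup_eq_generateFrom_image2_inter m₂ m₃)
    (isPiSystem_image2_inter m₂ m₃) huniv integrable_condExp hXi ?_ hs
  rintro _ ⟨s, hs, t, ht, rfl⟩
  rw [setIntegral_inter_eq_measureReal_mul_of_indep hm₁ hm₃ hindep
      (stronglyMeasurable_condExp.mono hm₂₁) (hm₂₁ s hs) ht,
    setIntegral_inter_eq_measureReal_mul_of_indep hm₁ hm₃ hindep hX (hm₂₁ s hs) ht,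
    setIntegral_condExp hm₂ hXi hs]

theorem integral_mul_eq_zero_of_condExp_eq_zero {m : MeasurableSpace Ω} [m0 : MeasurableSpace Ω]
    {μ : Measure Ω} [IsFiniteMeasure μ] (hm : m ≤ m0) {g h : Ω → ℝ} (hg : StronglyMeasurable[m] g)
    (hgh : Integrable (fun x => g x * h x) μ) (hh : Integrable h μ) (hzero : μ[h | m] =ᵐ[μ] 0) :
    ∫ x, g x * h x ∂μ = 0 := by
  calc ∫ x, g x * h x ∂μ = ∫ x, (μ[g * h | m]) x ∂μ := (integral_condExp hm).symm
    _ = ∫ x, g x * (μ[h | m]) x ∂μ :=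
        integral_congr_ae (condExp_mul_of_stronglyMeasurable_left hg hgh hh)
    _ = ∫ _, (0 : ℝ) ∂μ := integral_congr_ae (hzero.mono fun x hx => by simp [hx])
    _ = 0 := integral_zero Ω ℝ

end General

section CoordSigma

variable {Ω : Type*} [MeasurableSpace Ω] {K : ℕ} {W : Ω → Fin K → ℝ}

theorem coordSigmaIn_eq_biSup (W : Ω → Fin K → ℝ) (S : Finset (Fin K)) :
    coordSigmaIn W S = ⨆ i ∈ S, MeasurableSpace.comap (fun ω => W ω i) inferInstance := by
  rw [coordSigmaIn, MeasurableSpace.pi, MeasurableSpace.comap_iSup]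
  simp_rw [MeasurableSpace.comap_comp]
  rw [iSup_subtype]
  rfl

theorem coordSigmaIn_le (hW : Measurable W) (S : Finset (Fin K)) :
    coordSigmaIn W S ≤ ‹MeasurableSpace Ω› :=
  Measurable.comap_le (measurable_pi_lambda _ fun i => (measurable_pi_apply (i : Fin K)).comp hW)

theorem coordSigmaIn_mono {S T : Finset (Fin K)} (hST : S ⊆ T) :
    coordSigmaIn W S ≤ coordSigmaIn W T := by
  rw [coordSigmaIn_eq_biSup, coordSigmaIn_eq_biSup]
  exact biSup_mono fun i hi => hST hi

theorem coordSigmaIn_union (S T : Finset (Fin K)) :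
    coordSigmaIn W (S ∪ T) = coordSigmaIn W S ⊔ coordSigmaIn W T := by
  simp only [coordSigmaIn_eq_biSup, Finset.mem_union, iSup_or, iSup_sup_eq]

theorem indep_coordSigmaIn {μ : Measure Ω} (hW : Measurable W)
    (hiW : iIndepFun (m := fun _ : Fin K => (inferInstance : MeasurableSpace ℝ))
      (fun i ω => W ω i) μ)
    {S T : Finset (Fin K)} (hST : Disjoint S T) :
    Indep (coordSigmaIn W S) (coordSigmaIn W T) μ := by
  rw [coordSigmaIn_eq_biSup, coordSigmaIn_eq_biSup]
  simpa using indep_iSup_of_disjoint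
    (m := fun i : Fin K => MeasurableSpace.comap (fun ω => W ω i) inferInstance)
    (fun i => ((measurable_pi_apply i).comp hW).comap_le) hiW.iIndep
    (Finset.disjoint_coe.mpr hST)

end CoordSigma

section Anova

variable {Ω : Type*} [MeasurableSpace Ω] {μ : Measure Ω} {K : ℕ} {W : Ω → Fin K → ℝ}
  {f : (Fin K → ℝ) → ℝ}

theorem anovaComp_eq (μ : Measure Ω) (W : Ω → Fin K → ℝ) (f : (Fin K → ℝ) → ℝ)
    (S : Finset (Fin K)) :
    anovaComp μ W f S =
      μ[(fun ω => f (W ω)) - ∑ S' ∈ S.ssubsets, anovaComp μ W f S' | coordSigmaIn W S] := by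
  rw [anovaComp]
  congr 1
  funext ω
  simp only [Pi.sub_apply, Finset.sum_apply]
  exact congrArg _ (Finset.sum_attach _ fun S' => anovaComp μ W f S' ω)

theorem stronglyMeasurable_anovaComp (S : Finset (Fin K)) :
    StronglyMeasurable[coordSigmaIn W S] (anovaComp μ W f S) := by
  rw [anovaComp]
  exact stronglyMeasurable_condExp

theorem integrable_anovaComp (S : Finset (Fin K)) : Integrable (anovaComp μ W f S) μ := by
  rw [anovaComp]
  exact integrable_condExp

theorem memLp_anovaComp (hL2 : MemLp (fun ω => f (W ω)) 2 μ) (S : Finset (Fin K)) :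
    MemLp (anovaComp μ W f S) 2 μ := by
  induction S using Finset.strongInduction with
  | H S ih =>
    rw [anovaComp_eq]
    exact (hL2.sub (memLp_finsetSum' _ fun S' hS' => ih S' (Finset.mem_ssubsets.mp hS'))).condExp
      one_le_two

variable [IsFiniteMeasure μ]

theorem condExp_eq_sum_anovaComp (hW : Measurable W) (hfi : Integrable (fun ω => f (W ω)) μ)
    (R : Finset (Fin K)) :
    μ[fun ω => f (W ω) | coordSigmaIn W R] =ᵐ[μ] ∑ S ∈ R.powerset, anovaComp μ W f S := by
  have hlower : StronglyMeasurable[coordSigmaIn W R] (∑ S ∈ R.ssubsets, anovaComp μ W f S) :=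
    Finset.stronglyMeasurable_sum _ fun S hS => (stronglyMeasurable_anovaComp S).mono
      (coordSigmaIn_mono (Finset.mem_ssubsets.mp hS).subset)
  have hint : Integrable (∑ S ∈ R.ssubsets, anovaComp μ W f S) μ :=
    integrable_finsetSum' _ fun S _ => integrable_anovaComp S
  have hsplit := condExp_sub hfi hint (coordSigmaIn W R)
  rw [← anovaComp_eq, condExp_of_stronglyMeasurable (coordSigmaIn_le hW R) hlower hint] at hsplit
  filter_upwards [hsplit] with ω hω
  rw [← Finset.add_sum_erase _ _ (Finset.mem_powerset_self R)]
  simp only [Pi.sub_apply, Pi.add_apply, Finset.sum_apply] at hω ⊢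
  rw [hω]
  exact (sub_add_cancel _ _).symm

theorem condExp_anovaComp_eq_condExp_inter (hW : Measurable W)
    (hiW : iIndepFun (m := fun _ : Fin K => (inferInstance : MeasurableSpace ℝ))
      (fun i ω => W ω i) μ) (S T : Finset (Fin K)) :
    μ[anovaComp μ W f S | coordSigmaIn W T] =ᵐ[μ]
      μ[anovaComp μ W f S | coordSigmaIn W (S ∩ T)] := by
  have hT : T = (S ∩ T) ∪ (T \ S) := by
    ext i
    simp only [mem_union, mem_inter, mem_sdiff]
    tauto
  nth_rw 1 [hT]
  rw [coordSigmaIn_union]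
  exact condExp_sup_indep_eq (coordSigmaIn_le hW S) (coordSigmaIn_le hW _)
    (coordSigmaIn_mono inter_subset_left) (indep_coordSigmaIn hW hiW disjoint_sdiff)
    (stronglyMeasurable_anovaComp S)

theorem condExp_anovaComp_eq_zero (hW : Measurable W)
    (hiW : iIndepFun (m := fun _ : Fin K => (inferInstance : MeasurableSpace ℝ))
      (fun i ω => W ω i) μ)
    (hfi : Integrable (fun ω => f (W ω)) μ) {S T : Finset (Fin K)} (hST : ¬ S ⊆ T) :
    μ[anovaComp μ W f S | coordSigmaIn W T] =ᵐ[μ] 0 := by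
  induction S using Finset.strongInduction generalizing T with
  | H S ih =>
    set R := S ∩ T
    have hRS : R ⊂ S :=
      ssubset_of_subset_of_ne inter_subset_left fun h => hST (inter_eq_left.mp h)
    have hint : ∀ S' ∈ S.ssubsets, Integrable (anovaComp μ W f S') μ :=
      fun S' _ => integrable_anovaComp S'
    have htower : μ[anovaComp μ W f S | coordSigmaIn W R] =ᵐ[μ]
        μ[fun ω => f (W ω) | coordSigmaIn W R] -
          ∑ S' ∈ S.ssubsets, μ[anovaComp μ W f S' | coordSigmaIn W R] := by
      rw [anovaComp_eq μ W f S]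
      refine (condExp_condExp_of_le (coordSigmaIn_mono hRS.subset) (coordSigmaIn_le hW S)).trans
        ((condExp_sub hfi (integrable_finsetSum' _ hint) _).trans ?_)
      exact Filter.EventuallyEq.rfl.sub (condExp_finsetSum hint _)
    have hlower : ∀ᵐ ω ∂μ, ∀ S' ∈ S.ssubsets, μ[anovaComp μ W f S' | coordSigmaIn W R] ω =
        if S' ⊆ R then anovaComp μ W f S' ω else 0 := by
      refine (Filter.eventually_all_finset _).2 fun S' hS' => ?_
      split_ifs with hS'R
      · exact Filter.Eventually.of_forall <| congrFun <| condExp_of_stronglyMeasurable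
          (coordSigmaIn_le hW R) ((stronglyMeasurable_anovaComp S').mono (coordSigmaIn_mono hS'R))
          (integrable_anovaComp S')
      · exact ih S' (mem_ssubsets.mp hS') hS'R
    have hfilter : S.ssubsets.filter (· ⊆ R) = R.powerset := by
      ext U
      simpa using fun hU => hU.trans_ssubset hRS
    filter_upwards [condExp_anovaComp_eq_condExp_inter hW hiW S T, htower, hlower,
      condExp_eq_sum_anovaComp hW hfi R] with ω h1 h2 h3 h4
    rw [h1, h2, Pi.sub_apply, h4, Finset.sum_apply, Finset.sum_apply, sum_congr rfl h3,
      ← sum_filter, hfilter, sub_self, Pi.zero_apply]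

theorem integral_anovaComp_mul_eq_zero_of_not_subset (hW : Measurable W)
    (hiW : iIndepFun (m := fun _ : Fin K => (inferInstance : MeasurableSpace ℝ))
      (fun i ω => W ω i) μ)
    (hL2 : MemLp (fun ω => f (W ω)) 2 μ) {S T : Finset (Fin K)} (hST : ¬ S ⊆ T) :
    ∫ ω, anovaComp μ W f S ω * anovaComp μ W f T ω ∂μ = 0 := by
  simp_rw [mul_comm (anovaComp μ W f S _)]
  exact integral_mul_eq_zero_of_condExp_eq_zero (coordSigmaIn_le hW T)
    (stronglyMeasurable_anovaComp T)
    ((memLp_anovaComp hL2 T).integrable_mul (memLp_anovaComp hL2 S)) (integrable_anovaComp S)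
    (condExp_anovaComp_eq_zero hW hiW (hL2.integrable one_le_two) hST)

end Anova

theorem stmt8_general {Ω : Type*} [MeasurableSpace Ω] (μ : Measure Ω) [IsProbabilityMeasure μ]
    {K : ℕ} (W : Ω → Fin K → ℝ) (hW : Measurable W)
    (hiW : iIndepFun (m := fun _ : Fin K => (inferInstance : MeasurableSpace ℝ))
      (fun i ω => W ω i) μ)
    (f : (Fin K → ℝ) → ℝ)
    (hL2 : MemLp (fun ω => f (W ω)) 2 μ)
    (S S' : Finset (Fin K)) (hne : S ≠ S') :
    ∫ ω, anovaComp μ W f S ω * anovaComp μ W f S' ω ∂μ = 0 := by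
  by_cases hSS' : S ⊆ S'
  · have hS'S : ¬ S' ⊆ S := fun h => hne (hSS'.antisymm h)
    simpa only [mul_comm] using integral_anovaComp_mul_eq_zero_of_not_subset hW hiW hL2 hS'S
  · exact integral_anovaComp_mul_eq_zero_of_not_subset hW hiW hL2 hSS'

/-- Hoeffding orthogonality: distinct ANOVA components are orthogonal in `L²`. -/
theorem stmt8 {Ω : Type*} [MeasurableSpace Ω] (μ : Measure Ω) [IsProbabilityMeasure μ]
    {K : ℕ} (W : Ω → Fin K → ℝ) (hW : Measurable W)
    (hiW : iIndepFun (m := fun _ : Fin K => (inferInstance : MeasurableSpace ℝ))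
      (fun i ω => W ω i) μ)
    (hWL2 : ∀ i, MemLp (fun ω => W ω i) 2 μ)
    (f : (Fin K → ℝ) → ℝ) (hf : Measurable f)
    (hL2 : MemLp (fun ω => f (W ω)) 2 μ)
    (S S' : Finset (Fin K)) (hne : S ≠ S') :
    ∫ ω, anovaComp μ W f S ω * anovaComp μ W f S' ω ∂μ = 0 :=
  stmt8_general μ W hW hiW f hL2 S S' hne
end

section
/- Consider the comonotone structural model W1 = E1, Y = W1 + E2, where E1, E2 are independent Rademacher variables, versus the non-comonotone model W1 = E1, Y = W1 + W1*E2 = W1(1 + E2). In both models the joint distribution of (W1, Y) is identical, but the counterfactual explainability of W1, defined as Var(Y(W1) - Y(W1'))/(2 Var(Y)) with W1' an independent copy of W1 and the potential outcomes Y(w1) given by w1 + E2 and w1 + w1*E2 respectively, equals 1/2 in the first model and 1 in the second. -/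
/-!
By independence, `((W1, E2), W1')` (with `W1 = E1`) is uniformly distributed on the eight
points of `{±1}³`, so every law and variance in the statement is a finite average over these points.
The joint laws of `(W1, Y)` agree because both models put mass `1/4` on each of `(1, 2)`,
`(1, 0)`, `(-1, 0)`, `(-1, -2)`: they differ only by swapping the images of `(W1, E2) = (-1, 1)`
and `(-1, -1)`. Both outcomes have variance `2`, while the counterfactual contrast is `W1 - W1'`
(variance `2`) in the first model and `(W1 - W1')(1 + E2)` (variance `4`) in the second.
-/

open MeasureTheory ProbabilityTheory

/-- A Rademacher random variable takes values -1 and 1 with probability 1/2 each. -/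
def IsRademacher {Ω : Type*} [MeasurableSpace Ω] (μ : Measure Ω) (X : Ω → ℝ) : Prop :=
  μ {ω | X ω = 1} = 1/2 ∧ μ {ω | X ω = -1} = 1/2

open Measure
open scoped ENNReal

noncomputable def rademacher : Measure ℝ := (2⁻¹ : ℝ≥0∞) • (dirac 1 + dirac (-1))

theorem IsRademacher.map_eq {Ω : Type*} [MeasurableSpace Ω] {μ : Measure Ω}
    [IsProbabilityMeasure μ] {X : Ω → ℝ} (hX : Measurable X) (h : IsRademacher μ X) :
    μ.map X = rademacher := by
  have : IsProbabilityMeasure (μ.map X) := isProbabilityMeasure_map hX.aemeasurable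
  have h_one : μ.map X {1} = 2⁻¹ := by
    rw [map_apply hX (measurableSet_singleton _), ← one_div]; exact h.1
  have h_neg_one : μ.map X {-1} = 2⁻¹ := by
    rw [map_apply hX (measurableSet_singleton _), ← one_div]; exact h.2
  have h_disj : Disjoint ({1} : Set ℝ) {-1} := by norm_num
  have h_ae : ({1} ∪ {-1} : Set ℝ) ∈ ae (μ.map X) := by
    rw [mem_ae_iff,
      prob_compl_eq_zero_iff ((measurableSet_singleton _).union (measurableSet_singleton _)),
      measure_union h_disj (measurableSet_singleton _), h_one, h_neg_one,
      ENNReal.inv_two_add_inv_two]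
  rw [← restrict_eq_self_of_ae_mem (s := {1} ∪ {-1}) h_ae,
    restrict_union h_disj (measurableSet_singleton _), restrict_singleton, restrict_singleton,
    h_one, h_neg_one, rademacher, smul_add]

theorem integrable_smul_dirac {α : Type*} [MeasurableSpace α] [MeasurableSingletonClass α]
    (f : α → ℝ) {c : ℝ≥0∞} (hc : c ≠ ∞) (a : α) : Integrable f (c • dirac a) :=
  (integrable_dirac enorm_lt_top).smul_measure hc

/-- The joint law of `((W1, E2), W1')`. -/
noncomputable def rademacherCube : Measure ((ℝ × ℝ) × ℝ) :=
  (rademacher.prod rademacher).prod rademacher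

theorem rademacherCube_eq : rademacherCube = (8⁻¹ : ℝ≥0∞) •
    (dirac ((1, 1), 1) + dirac ((1, 1), -1) + dirac ((1, -1), 1) + dirac ((1, -1), -1) +
      dirac ((-1, 1), 1) + dirac ((-1, 1), -1) + dirac ((-1, -1), 1) + dirac ((-1, -1), -1)) := by
  have h_weight : (2⁻¹ * (2⁻¹ * 2⁻¹) : ℝ≥0∞) = 8⁻¹ := by
    rw [← ENNReal.mul_inv (by simp) (by simp), ← ENNReal.mul_inv (by simp) (by simp)]
    norm_num
  simp only [rademacherCube, rademacher, prod_smul_left, prod_smul_right, prod_add, add_prod,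
    dirac_prod_dirac, smul_smul, h_weight, smul_add]
  abel

theorem integral_rademacherCube (f : (ℝ × ℝ) × ℝ → ℝ) :
    ∫ p, f p ∂rademacherCube = 8⁻¹ * (f ((1, 1), 1) + f ((1, 1), -1) + f ((1, -1), 1) +
      f ((1, -1), -1) + f ((-1, 1), 1) + f ((-1, 1), -1) + f ((-1, -1), 1) + f ((-1, -1), -1)) := by
  simp [rademacherCube_eq, integral_add_measure, integrable_smul_dirac, mul_add]

theorem rademacherCube_map_add_eq_map_mul :
    rademacherCube.map (fun p => (p.1.1, p.1.1 + p.1.2)) =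
      rademacherCube.map (fun p => (p.1.1, p.1.1 * (1 + p.1.2))) := by
  have h_add : Measurable fun p : (ℝ × ℝ) × ℝ => (p.1.1, p.1.1 + p.1.2) := by fun_prop
  have h_mul : Measurable fun p : (ℝ × ℝ) × ℝ => (p.1.1, p.1.1 * (1 + p.1.2)) := by fun_prop
  simp only [rademacherCube_eq, Measure.map_smul, Measure.map_add _ _ h_add,
    Measure.map_add _ _ h_mul, map_dirac' h_add, map_dirac' h_mul]
  norm_num
  abel

/-- Non-identifiability of counterfactual explainability: the comonotone model
`Y = W1 + E2` and the non-comonotone model `Y = W1(1 + E2)` induce the same joint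
distribution of `(W1, Y)`, but the counterfactual explainability of `W1`,
`Var(Y(W1) - Y(W1')) / (2 Var(Y))`, equals `1/2` in the first model and `1` in the
second. -/
theorem stmt18 {Ω : Type*} [MeasurableSpace Ω] (μ : Measure Ω) [IsProbabilityMeasure μ]
    (E1 E2 W1' : Ω → ℝ) (hE1 : Measurable E1) (hE2 : Measurable E2)
    (hW1' : Measurable W1')
    (hR1 : IsRademacher μ E1) (hR2 : IsRademacher μ E2)
    (hindep : IndepFun E1 E2 μ)
    (W1 : Ω → ℝ) (hW1 : W1 = E1)
    (hcopy : μ.map W1' = μ.map W1)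
    (hindep' : IndepFun (fun ω => (W1 ω, E2 ω)) W1' μ)
    (Y1 Y2 : Ω → ℝ)
    (hY1 : Y1 = fun ω => W1 ω + E2 ω)
    (hY2 : Y2 = fun ω => W1 ω * (1 + E2 ω)) :
    μ.map (fun ω => (W1 ω, Y1 ω)) = μ.map (fun ω => (W1 ω, Y2 ω)) ∧
    variance (fun ω => (W1 ω + E2 ω) - (W1' ω + E2 ω)) μ / (2 * variance Y1 μ) = 1/2 ∧
    variance (fun ω => W1 ω * (1 + E2 ω) - W1' ω * (1 + E2 ω)) μ
      / (2 * variance Y2 μ) = 1 := by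
  subst hW1 hY1 hY2
  have h_law : MeasurePreserving (fun ω => ((W1 ω, E2 ω), W1' ω)) μ rademacherCube := by
    refine ⟨by fun_prop, ?_⟩
    rw [hindep'.map_prod_eq_prod_map_map (by fun_prop) hW1'.aemeasurable,
      hindep.map_prod_eq_prod_map_map hE1.aemeasurable hE2.aemeasurable, hcopy,
      hR1.map_eq hE1, hR2.map_eq hE2, rademacherCube]
  have h_var (f : (ℝ × ℝ) × ℝ → ℝ) (hf : Measurable f) :
      Var[fun ω => f ((W1 ω, E2 ω), W1' ω); μ] =
        ∫ p, (f p - ∫ q, f q ∂rademacherCube) ^ 2 ∂rademacherCube := by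
    rw [h_law.variance_fun_comp hf.aemeasurable, variance_eq_integral hf.aemeasurable]
  have h_var_contrast_add : Var[fun ω => (W1 ω + E2 ω) - (W1' ω + E2 ω); μ] = 2 :=
    (h_var (fun p => (p.1.1 + p.1.2) - (p.2 + p.1.2)) (by fun_prop)).trans
      (by simp only [integral_rademacherCube]; norm_num)
  have h_var_add : Var[fun ω => W1 ω + E2 ω; μ] = 2 :=
    (h_var (fun p => p.1.1 + p.1.2) (by fun_prop)).trans
      (by simp only [integral_rademacherCube]; norm_num)
  have h_var_contrast_mul : Var[fun ω => W1 ω * (1 + E2 ω) - W1' ω * (1 + E2 ω); μ] = 4 :=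
    (h_var (fun p => p.1.1 * (1 + p.1.2) - p.2 * (1 + p.1.2)) (by fun_prop)).trans
      (by simp only [integral_rademacherCube]; norm_num)
  have h_var_mul : Var[fun ω => W1 ω * (1 + E2 ω); μ] = 2 :=
    (h_var (fun p => p.1.1 * (1 + p.1.2)) (by fun_prop)).trans
      (by simp only [integral_rademacherCube]; norm_num)
  refine ⟨?_, by rw [h_var_contrast_add, h_var_add]; norm_num,
    by rw [h_var_contrast_mul, h_var_mul]; norm_num⟩
  have h_map := rademacherCube_map_add_eq_map_mul
  rwa [← h_law.map_eq, map_map (by fun_prop) h_law.measurable,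
    map_map (by fun_prop) h_law.measurable] at h_map
end
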